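/- Let m > 0, let X be a random variable uniformly distributed on [-1,1], and let W be an independent Gaussian random variable with mean 0 and variance m². Then the variance of cos(π W X) equals 1/2 + erf(√2 m π)/(4 √(2π) m) − ( erf(m π/√2) / (m √(2π)) )², where erf denotes the Gauss error function. -/

import Mathlib

/-!
Conditionally on `X = x`, the variable `s W x` is a centred Gaussian, so the expectation of
`cos (s W x)` is the real part of its characteristic function, `exp (-(m s x)² / 2)`.
Averaging over `X` uniform on `[-1, 1]` turns this Gaussian in `x` into an error function.
The variance then follows from `cos² θ = (1 + cos 2θ) / 2`, used with `s = π` and `s = 2π`.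
-/

open Real MeasureTheory ProbabilityTheory

noncomputable def erf (z : ℝ) : ℝ := (2 / Real.sqrt π) * ∫ t in (0:ℝ)..z, Real.exp (-t ^ 2)

open scoped NNReal

lemma integral_cos_mul_gaussianReal (μ : ℝ) (v : ℝ≥0) (t : ℝ) :
    ∫ x, cos (t * x) ∂gaussianReal μ v = cos (t * μ) * exp (-(v * t ^ 2 / 2)) := by
  have hint : Integrable (fun x : ℝ => Complex.exp (t * x * Complex.I)) (gaussianReal μ v) :=
    .of_bound (by fun_prop) 1 (.of_forall fun x => by
      rw [← Complex.ofReal_mul, Complex.norm_exp_ofReal_mul_I])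
  have h := congrArg Complex.re (charFun_gaussianReal (μ := μ) (v := v) t)
  rw [charFun_apply_real, ← RCLike.re_to_complex, ← integral_re hint] at h
  simp_rw [RCLike.re_to_complex, ← Complex.ofReal_mul, Complex.exp_ofReal_mul_I_re] at h
  rw [h, Complex.exp_re]
  norm_num [← Complex.ofReal_pow, ← Complex.ofReal_natCast]
  ring_nf

lemma integral_exp_neg_sq_symm_eq_erf (c : ℝ) :
    ∫ t in -c..c, exp (-t ^ 2) = √π * erf c := by
  have heven : ∫ t in -c..0, exp (-t ^ 2) = ∫ t in (0:ℝ)..c, exp (-t ^ 2) := by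
    have h := intervalIntegral.integral_comp_neg (a := 0) (b := c) (fun t => exp (-t ^ 2))
    rw [neg_zero] at h
    simp only [← h, even_two, Even.neg_pow]
  have hcont : Continuous fun t : ℝ => exp (-t ^ 2) := by fun_prop
  rw [← intervalIntegral.integral_add_adjacent_intervals (b := 0) (hcont.intervalIntegrable _ _)
    (hcont.intervalIntegrable _ _), heven, erf]
  field_simp
  ring

lemma integral_exp_neg_mul_sq_neg_one_one {c : ℝ} (hc : c ≠ 0) :
    ∫ x in (-1:ℝ)..1, exp (-(c * x) ^ 2) = √π * erf c / c := by
  rw [intervalIntegral.integral_comp_mul_left (fun t => exp (-t ^ 2)) hc, mul_neg, mul_one,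
    integral_exp_neg_sq_symm_eq_erf, smul_eq_mul]
  field_simp

lemma integral_cond_Icc {a b : ℝ} (hab : a < b) (f : ℝ → ℝ) :
    ∫ x, f x ∂(volume[|Set.Icc a b]) = (b - a)⁻¹ * ∫ x in a..b, f x := by
  rw [ProbabilityTheory.cond, integral_smul_measure, Real.volume_Icc,
    intervalIntegral.integral_of_le hab.le, integral_Icc_eq_integral_Ioc, ENNReal.toReal_inv,
    ENNReal.toReal_ofReal (by linarith), smul_eq_mul]

theorem ProbabilityTheory.IndepFun.integral_comp_eq_integral_integral {Ω α β E : Type*}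
    {mΩ : MeasurableSpace Ω} {mα : MeasurableSpace α} {mβ : MeasurableSpace β}
    [NormedAddCommGroup E] [NormedSpace ℝ E] {μ : Measure Ω} [IsFiniteMeasure μ]
    {X : Ω → α} {Y : Ω → β} (hXY : IndepFun X Y μ) (hX : AEMeasurable X μ)
    (hY : AEMeasurable Y μ) {f : α × β → E} (hf : Integrable f ((μ.map X).prod (μ.map Y))) :
    ∫ ω, f (X ω, Y ω) ∂μ = ∫ x, ∫ y, f (x, y) ∂(μ.map Y) ∂(μ.map X) := by
  have hmap := (indepFun_iff_map_prod_eq_prod_map_map hX hY).mp hXY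
  rw [← integral_prod f hf, ← hmap, integral_map (hX.prodMk hY) (hmap ▸ hf.aestronglyMeasurable)]

theorem ProbabilityTheory.variance_cos {Ω : Type*} {mΩ : MeasurableSpace Ω} {μ : Measure Ω}
    [IsProbabilityMeasure μ] {f : Ω → ℝ} (hf : AEMeasurable f μ) :
    variance (fun ω => cos (f ω)) μ
      = 1 / 2 + (∫ ω, cos (2 * f ω) ∂μ) / 2 - (∫ ω, cos (f ω) ∂μ) ^ 2 := by
  have hcos2 : Integrable (fun ω => cos (2 * f ω)) μ :=
    .of_bound (by fun_prop) 1 (.of_forall fun ω => abs_cos_le_one _)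
  have hmem : MemLp (fun ω => cos (f ω)) 2 μ :=
    memLp_of_bounded (.of_forall fun ω => ⟨neg_one_le_cos _, cos_le_one _⟩) (by fun_prop) 2
  rw [variance_eq_sub hmem]
  simp only [Pi.pow_apply, cos_sq, add_comm (1 / 2 : ℝ)]
  rw [integral_add (hcos2.div_const 2) (integrable_const _), integral_div, integral_const]
  simp

lemma aemeasurable_of_map_eq_gaussianReal {Ω : Type*} {mΩ : MeasurableSpace Ω} {μ : Measure Ω}
    {W : Ω → ℝ} {μ₀ : ℝ} {v : ℝ≥0} (hW : μ.map W = gaussianReal μ₀ v) : AEMeasurable W μ :=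
  aemeasurable_of_map_neZero (by rw [hW]; infer_instance)

section UniformTimesGaussian

variable {Ω : Type*} [MeasureSpace Ω] [IsProbabilityMeasure (ℙ : Measure Ω)] {m : ℝ} {X W : Ω → ℝ}

lemma integral_cos_mul_gaussian_mul_uniform (hm : m ≠ 0)
    (hX : pdf.IsUniform X (Set.Icc (-1:ℝ) 1) ℙ)
    (hW : Measure.map W ℙ = gaussianReal 0 ⟨m ^ 2, sq_nonneg m⟩)
    (hindep : IndepFun X W ℙ) {s : ℝ} (hs : s ≠ 0) :
    ∫ ω, cos (s * W ω * X ω) = √π * erf (m * s / √2) / (2 * (m * s / √2)) := by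
  have hint : Integrable (fun p : ℝ × ℝ => cos (s * p.2 * p.1))
      ((Measure.map X ℙ).prod (Measure.map W ℙ)) :=
    .of_bound (by fun_prop) 1 (.of_forall fun p => abs_cos_le_one _)
  have hgauss (x : ℝ) :
      ∫ w, cos (s * w * x) ∂(Measure.map W ℙ) = exp (-(m * s / √2 * x) ^ 2) := by
    simp_rw [mul_right_comm s]
    rw [hW]
    -- `⟨m ^ 2, _⟩` is elaborated as a subtype rather than an `ℝ≥0`, which defeats `rw`.
    refine (integral_cos_mul_gaussianReal 0 _ (s * x)).trans ?_
    change cos _ * exp (-(m ^ 2 * (s * x) ^ 2 / 2)) = _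
    rw [mul_zero, cos_zero, one_mul, div_mul_eq_mul_div, div_pow, sq_sqrt zero_le_two]
    ring_nf
  rw [hindep.integral_comp_eq_integral_integral (hX.aemeasurable (by simp) (by simp))
    (aemeasurable_of_map_eq_gaussianReal hW) hint]
  simp only [hgauss]
  rw [hX, integral_cond_Icc (by norm_num), integral_exp_neg_mul_sq_neg_one_one (by positivity)]
  ring

end UniformTimesGaussian

/-- If `X` is uniform on `[-1,1]`, `W` is Gaussian `N(0, m²)` with `m > 0`, and `X`, `W` are
independent, then `Var(cos(π W X)) = 1/2 + erf(√2 m π)/(4 √(2π) m) − (erf(mπ/√2)/(m√(2π)))²`. -/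
theorem variance_cos_hidden_node
    {Ω : Type*} [MeasureSpace Ω] [IsProbabilityMeasure (ℙ : Measure Ω)]
    (m : ℝ) (hm : 0 < m) (X W : Ω → ℝ)
    (hX : MeasureTheory.pdf.IsUniform X (Set.Icc (-1:ℝ) 1) ℙ)
    (hW : Measure.map W ℙ = gaussianReal 0 ⟨m ^ 2, sq_nonneg m⟩)
    (hindep : IndepFun X W ℙ) :
    variance (fun ω => Real.cos (π * W ω * X ω)) ℙ =
      1 / 2 + erf (Real.sqrt 2 * m * π) / (4 * Real.sqrt (2 * π) * m) -
        (erf (m * π / Real.sqrt 2) / (m * Real.sqrt (2 * π))) ^ 2 := by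
  have hXm : AEMeasurable X ℙ := hX.aemeasurable (by simp) (by simp)
  have hWm : AEMeasurable W ℙ := aemeasurable_of_map_eq_gaussianReal hW
  have h2 : √2 ^ 2 = 2 := sq_sqrt zero_le_two
  have hπ : √π ^ 2 = π := sq_sqrt pi_pos.le
  have hmean : ∫ ω, cos (π * W ω * X ω) = erf (m * π / √2) / (m * √(2 * π)) := by
    rw [integral_cos_mul_gaussian_mul_uniform hm.ne' hX hW hindep pi_ne_zero,
      sqrt_mul zero_le_two]
    field_simp
    rw [h2, hπ]
    ring
  have hsecond : ∫ ω, cos (2 * π * W ω * X ω) = erf (√2 * m * π) / (2 * √(2 * π) * m) := by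
    rw [integral_cos_mul_gaussian_mul_uniform hm.ne' hX hW hindep (by positivity),
      sqrt_mul zero_le_two, show m * (2 * π) / √2 = √2 * m * π by field_simp; rw [h2]]
    field_simp
    rw [hπ]
  rw [variance_cos (by fun_prop)]
  simp_rw [← mul_assoc]
  rw [hmean, hsecond]
  ring
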